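/- Let G be a free group on generators x, y, z and let n ≥ 1. Then the n-th power commutator [x,y]^n lies in G^(2) ∩ G^(3),n, and conversely G^(2) ∩ G^(3),n ⊆ G^(3) · (G^(2))^{n_2} where n_2 = n/gcd(n,2); i.e., the image of G^(2) ∩ G^(3),n in G^(2)/G^(3) equals n_2·(G^(2)/G^(3)). -/

import Mathlib

/-- The commutator `[a,b] = a⁻¹ b⁻¹ a b`. -/
def commP {G : Type*} [Group G] (a b : G) : G := a⁻¹ * b⁻¹ * a * b

/-- The lower central series with the paper's indexing: `plcs G 1 = G`,
`plcs G (k+1) = [plcs G k, G]`. -/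
def plcs (G : Type*) [Group G] (k : ℕ) : Subgroup G := (⊤ : Subgroup G).lowerCentralSeries (k - 1)

/-- The subgroup generated by `n`-th powers. -/
def powSubgroup (G : Type*) [Group G] (n : ℕ) : Subgroup G :=
  Subgroup.closure {x : G | ∃ g : G, g ^ n = x}

/-!
Modulo `γ₃` the free group has class two, so `(a b)^n = ⁅b, a⁆^(n choose 2) a^n b^n` with the
commutator central. Consequently, modulo `γ₃`, the subgroup generated by `n`-th powers consists of
the products `g^n c` with `c` in the subgroup generated by `n₂`-th powers of elements of `γ₂`, where
`n₂ = gcd(n, n choose 2) = n / gcd(n, 2)`; conversely, a Bezout relation between `n` and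
`n choose 2` puts `⁅g, h⁆^n₂` into `γ₃ G^n`. If `g^n c` lies in `γ₂`, so does `g^n`, and since the
abelianization of a free group is torsion-free, `g ∈ γ₂`; then `g^n` is itself an `n₂`-th power of
an element of `γ₂`.
-/

open scoped commutatorElement

open Subgroup

section PowerFormula

variable {G : Type*} [Group G] {a b : G}

theorem pow_mul_eq_commutatorElement_pow_mul_mul_pow (hb : Commute ⁅b, a⁆ b) (m : ℕ) :
    b ^ m * a = ⁅b, a⁆ ^ m * a * b ^ m := by
  induction m with
  | zero => simp
  | succ m ih =>
    have hba : b * a = ⁅b, a⁆ * a * b := by group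
    calc b ^ (m + 1) * a = b * (b ^ m * a) := by group
      _ = ⁅b, a⁆ ^ m * (b * a) * b ^ m := by
        rw [ih, ← mul_assoc, ← mul_assoc, ← (hb.pow_left m).eq]; group
      _ = ⁅b, a⁆ ^ (m + 1) * a * b ^ (m + 1) := by
        rw [hba, pow_succ, pow_succ']; simp only [mul_assoc]

theorem mul_pow_eq_commutatorElement_pow_choose_mul (ha : Commute ⁅b, a⁆ a)
    (hb : Commute ⁅b, a⁆ b) (m : ℕ) : (a * b) ^ m = ⁅b, a⁆ ^ m.choose 2 * a ^ m * b ^ m := by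
  induction m with
  | zero => simp
  | succ m ih =>
    calc (a * b) ^ (m + 1) = ⁅b, a⁆ ^ m.choose 2 * a ^ m * (b ^ m * a) * b := by
          rw [pow_succ, ih]; group
      _ = ⁅b, a⁆ ^ m.choose 2 * (⁅b, a⁆ ^ m * a ^ m) * a * b ^ m * b := by
          rw [pow_mul_eq_commutatorElement_pow_mul_mul_pow hb, ((ha.pow_right m).pow_left m).eq]
          group
      _ = ⁅b, a⁆ ^ (m + 1).choose 2 * a ^ (m + 1) * b ^ (m + 1) := by
          rw [Nat.choose_succ_succ', Nat.choose_one_right, pow_add]; group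

end PowerFormula

theorem div_gcd_two_eq_gcd_choose_two (n : ℕ) : n / n.gcd 2 = n.gcd (n.choose 2) := by
  rcases Nat.even_or_odd' n with ⟨k, rfl | rfl⟩
  · have hchoose : (2 * k).choose 2 = k * (2 * k - 1) := by
      rw [Nat.choose_two_right, mul_assoc, Nat.mul_div_cancel_left _ two_pos]
    rcases k.eq_zero_or_pos with rfl | hk
    · simp
    have hodd : Nat.Coprime 2 (2 * k - 1) := Nat.coprime_two_left.mpr ⟨k - 1, by omega⟩
    have hgcd : (2 * k).gcd (k * (2 * k - 1)) = k * Nat.gcd 2 (2 * k - 1) := by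
      rw [← Nat.gcd_mul_left, mul_comm k 2]
    rw [hchoose, Nat.gcd_mul_right_left, hgcd, hodd.gcd_eq_one, mul_one,
      Nat.mul_div_cancel_left _ two_pos]
  · have hchoose : (2 * k + 1).choose 2 = (2 * k + 1) * k := by
      rw [Nat.choose_two_right, Nat.add_sub_cancel, mul_comm 2 k, ← mul_assoc,
        Nat.mul_div_cancel _ two_pos]
    have hodd : Nat.Coprime (2 * k + 1) 2 := Nat.coprime_two_right.mpr (odd_two_mul_add_one k)
    rw [hchoose, Nat.gcd_mul_right_right, hodd.gcd_eq_one, Nat.div_one]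

theorem Subgroup.pow_gcd_mem {G : Type*} [Group G] {P : Subgroup G} {c : G} {a b : ℕ}
    (ha : c ^ a ∈ P) (hb : c ^ b ∈ P) : c ^ a.gcd b ∈ P := by
  rw [← zpow_natCast, Nat.gcd_eq_gcd_ab, zpow_add, zpow_mul, zpow_mul, zpow_natCast, zpow_natCast]
  exact mul_mem (zpow_mem ha _) (zpow_mem hb _)

section PowClosure

variable {G K : Type*} [Group G] [Group K]

def powClosure (H : Subgroup G) (k : ℕ) : Subgroup G :=
  closure {w | ∃ a ∈ H, a ^ k = w}

theorem powClosure_le (H : Subgroup G) (k : ℕ) : powClosure H k ≤ H :=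
  closure_le _ |>.mpr <| by rintro _ ⟨a, ha, rfl⟩; exact pow_mem ha k

theorem pow_mem_powClosure {H : Subgroup G} {a : G} (ha : a ∈ H) {k m : ℕ} (hkm : k ∣ m) :
    a ^ m ∈ powClosure H k := by
  obtain ⟨l, rfl⟩ := hkm
  rw [mul_comm, pow_mul]
  exact subset_closure ⟨a ^ l, pow_mem ha l, rfl⟩

theorem map_powClosure (f : G →* K) (H : Subgroup G) (k : ℕ) :
    (powClosure H k).map f = powClosure (H.map f) k := by
  rw [powClosure, MonoidHom.map_closure, powClosure]
  congr 1
  ext w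
  simp

theorem map_powSubgroup_of_surjective {f : G →* K} (hf : Function.Surjective f) (n : ℕ) :
    (powSubgroup G n).map f = powSubgroup K n := by
  rw [powSubgroup, MonoidHom.map_closure, powSubgroup]
  congr 1
  ext w
  simp [hf.exists]

end PowClosure

section ClassTwo

variable {Q : Type*} [Group Q]

theorem commute_of_mem_commutator (hQ : commutator Q ≤ center Q) {c : Q}
    (hc : c ∈ commutator Q) (x : Q) : Commute c x :=
  (mem_center_iff.mp (hQ hc) x).symm

theorem commutatorElement_mem_commutator (g h : Q) : ⁅g, h⁆ ∈ commutator Q :=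
  commutator_mem_commutator (mem_top g) (mem_top h)

theorem commutatorElement_pow_choose_two_mem_powSubgroup (hQ : commutator Q ≤ center Q)
    (g h : Q) (n : ℕ) : ⁅g, h⁆ ^ n.choose 2 ∈ powSubgroup Q n := by
  have hcentral := commute_of_mem_commutator hQ (commutatorElement_mem_commutator g h)
  have hpow : ∀ x : Q, x ^ n ∈ powSubgroup Q n := fun x => subset_closure ⟨x, rfl⟩
  have hformula := mul_pow_eq_commutatorElement_pow_choose_mul (hcentral h) (hcentral g) n
  have hsolved : ⁅g, h⁆ ^ n.choose 2 = (h * g) ^ n * (g ^ n)⁻¹ * (h ^ n)⁻¹ := by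
    rw [hformula]; group
  rw [hsolved]
  exact mul_mem (mul_mem (hpow _) (inv_mem (hpow _))) (inv_mem (hpow _))

theorem pow_gcd_choose_two_mem_powSubgroup (hQ : commutator Q ≤ center Q) {a : Q}
    (ha : a ∈ commutator Q) (n : ℕ) : a ^ n.gcd (n.choose 2) ∈ powSubgroup Q n := by
  rw [commutator_eq_closure] at ha
  induction ha using closure_induction with
  | mem c hc =>
    obtain ⟨g, h, rfl⟩ := hc
    exact Subgroup.pow_gcd_mem (subset_closure ⟨_, rfl⟩)
      (commutatorElement_pow_choose_two_mem_powSubgroup hQ g h n)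
  | one => rw [one_pow]; exact one_mem _
  | mul c d hc _ hpc hpd =>
    rw [(commute_of_mem_commutator hQ (by rwa [commutator_eq_closure]) d).mul_pow]
    exact mul_mem hpc hpd
  | inv c _ hpc => rw [inv_pow]; exact inv_mem hpc

theorem exists_pow_mul_of_mem_powSubgroup (hQ : commutator Q ≤ center Q) {n : ℕ} {w : Q}
    (hw : w ∈ powSubgroup Q n) :
    ∃ g, ∃ c ∈ powClosure (commutator Q) (n.gcd (n.choose 2)), w = g ^ n * c := by
  have hcentral {c} (hc : c ∈ powClosure (commutator Q) (n.gcd (n.choose 2))) :=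
    commute_of_mem_commutator hQ (powClosure_le _ _ hc)
  induction hw using closure_induction with
  | mem w hw =>
    obtain ⟨g, rfl⟩ := hw
    exact ⟨g, 1, one_mem _, (mul_one _).symm⟩
  | one => exact ⟨1, 1, one_mem _, by simp⟩
  | mul w w' _ _ ih ih' =>
    obtain ⟨g, c, hc, rfl⟩ := ih
    obtain ⟨g', c', hc', rfl⟩ := ih'
    have hformula := mul_pow_eq_commutatorElement_pow_choose_mul
      (commute_of_mem_commutator hQ (commutatorElement_mem_commutator g' g) g)
      (commute_of_mem_commutator hQ (commutatorElement_mem_commutator g' g) g') n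
    set z := ⁅g', g⁆ ^ n.choose 2
    have hz : z ∈ powClosure (commutator Q) (n.gcd (n.choose 2)) :=
      pow_mem_powClosure (commutatorElement_mem_commutator g' g) (Nat.gcd_dvd_right _ _)
    refine ⟨g * g', z⁻¹ * c * c', mul_mem (mul_mem (inv_mem hz) hc) hc', ?_⟩
    calc g ^ n * c * (g' ^ n * c') = g ^ n * g' ^ n * c * c' := by
          rw [mul_assoc, ← mul_assoc c, (hcentral hc _).eq]; group
      _ = z * (g ^ n * g' ^ n) * (z⁻¹ * c * c') := by
          rw [(hcentral hz _).eq]; group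
      _ = (g * g') ^ n * (z⁻¹ * c * c') := by rw [hformula]; simp only [mul_assoc]
  | inv w _ ih =>
    obtain ⟨g, c, hc, rfl⟩ := ih
    exact ⟨g⁻¹, c⁻¹, inv_mem hc, by rw [mul_inv_rev, inv_pow, (hcentral hc _).inv_inv.eq]⟩

theorem commutator_inf_powSubgroup_eq (hQ : commutator Q ≤ center Q) {n : ℕ}
    (hroot : ∀ g : Q, g ^ n ∈ commutator Q → g ∈ commutator Q) :
    commutator Q ⊓ powSubgroup Q n = powClosure (commutator Q) (n.gcd (n.choose 2)) := by
  refine le_antisymm ?_ (closure_le _ |>.mpr ?_)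
  · intro w hw
    obtain ⟨hw, hwn⟩ := mem_inf.mp hw
    obtain ⟨g, c, hc, rfl⟩ := exists_pow_mul_of_mem_powSubgroup hQ hwn
    have hg : g ∈ commutator Q := hroot g <| by
      simpa using mul_mem hw (inv_mem (powClosure_le _ _ hc))
    exact mul_mem (pow_mem_powClosure hg (Nat.gcd_dvd_left _ _)) hc
  · rintro _ ⟨a, ha, rfl⟩
    exact ⟨pow_mem ha _, pow_gcd_choose_two_mem_powSubgroup hQ ha n⟩

end ClassTwo

section LowerCentralSeries

variable {G : Type*} [Group G]

theorem lowerCentralSeries_quotient_eq_bot (k : ℕ) :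
    (⊤ : Subgroup (G ⧸ (⊤ : Subgroup G).lowerCentralSeries k)).lowerCentralSeries k = ⊥ := by
  rw [← map_top_of_surjective _ (QuotientGroup.mk'_surjective _), ← map_lowerCentralSeries,
    Subgroup.map_eq_bot_iff, QuotientGroup.ker_mk']

theorem commutator_quotient_le_center :
    commutator (G ⧸ (⊤ : Subgroup G).lowerCentralSeries 2) ≤
      center (G ⧸ (⊤ : Subgroup G).lowerCentralSeries 2) :=
  commutator_top_right_eq_bot_iff_le_center.mp (lowerCentralSeries_quotient_eq_bot 2)

theorem mem_commutator_of_pow_mem [IsMulTorsionFree (Abelianization G)] {g : G} {n : ℕ}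
    (hn : n ≠ 0) (h : g ^ n ∈ commutator G) : g ∈ commutator G := by
  rw [← Abelianization.ker_of, MonoidHom.mem_ker] at h ⊢
  rw [map_pow] at h
  exact (pow_eq_one_iff_left hn).mp h

theorem commutator_inf_sup_powSubgroup_eq [IsMulTorsionFree (Abelianization G)] {n : ℕ}
    (hn : n ≠ 0) :
    commutator G ⊓ ((⊤ : Subgroup G).lowerCentralSeries 2 ⊔ powSubgroup G n) =
      (⊤ : Subgroup G).lowerCentralSeries 2 ⊔ powClosure (commutator G) (n.gcd (n.choose 2)) := by
  set N := (⊤ : Subgroup G).lowerCentralSeries 2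
  set π := QuotientGroup.mk' N
  have hπ : Function.Surjective π := QuotientGroup.mk'_surjective N
  have hsup (H : Subgroup G) : N ⊔ H = (H.map π).comap π := by
    rw [comap_map_eq, QuotientGroup.ker_mk', sup_comm]
  have hmap : (commutator G).map π = commutator (G ⧸ N) := by
    rw [← top_lowerCentralSeries_one, map_lowerCentralSeries, map_top_of_surjective _ hπ]; rfl
  have hcomap : commutator G = (commutator (G ⧸ N)).comap π := by
    rw [← hmap, comap_map_eq, QuotientGroup.ker_mk', eq_comm, sup_eq_left]
    exact Subgroup.lowerCentralSeries_antitone _ one_le_two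
  have hroot (q : G ⧸ N) (hq : q ^ n ∈ commutator (G ⧸ N)) : q ∈ commutator (G ⧸ N) := by
    obtain ⟨g, rfl⟩ := hπ q
    rw [← map_pow, ← mem_comap, ← hcomap] at hq
    rw [← mem_comap, ← hcomap]
    exact mem_commutator_of_pow_mem hn hq
  rw [hsup, hsup, hcomap, ← comap_inf, map_powSubgroup_of_surjective hπ, map_powClosure, ← hcomap,
    hmap, commutator_inf_powSubgroup_eq commutator_quotient_le_center hroot]

end LowerCentralSeries

instance (α : Type*) : IsMulTorsionFree (Abelianization (FreeGroup α)) :=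
  Function.Injective.isMulTorsionFree
    (FreeAbelianGroup.equivFinsupp α).toAddMonoidHom.toMultiplicative
    (FreeAbelianGroup.equivFinsupp α).injective

theorem commP_eq_commutatorElement {G : Type*} [Group G] (a b : G) : commP a b = ⁅a⁻¹, b⁻¹⁆ := by
  simp [commP, commutatorElement_def]

theorem plcs2_inter_plcs3n (n : ℕ) (hn : 1 ≤ n) :
    let G := FreeGroup (Fin 3)
    let x : G := FreeGroup.of 0
    let y : G := FreeGroup.of 1
    (commP x y) ^ n ∈ plcs G 2 ⊓ (plcs G 3 ⊔ powSubgroup G n) ∧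
      plcs G 2 ⊓ (plcs G 3 ⊔ powSubgroup G n) =
        plcs G 3 ⊔
          Subgroup.closure {w : G | ∃ a ∈ plcs G 2, a ^ (n / Nat.gcd n 2) = w} := by
  intro G x y
  refine ⟨⟨?_, mem_sup_right (subset_closure ⟨commP x y, rfl⟩)⟩, ?_⟩
  · rw [commP_eq_commutatorElement]
    exact pow_mem (commutatorElement_mem_commutator _ _) n
  · rw [div_gcd_two_eq_gcd_choose_two]
    exact commutator_inf_sup_powSubgroup_eq (Nat.one_le_iff_ne_zero.mp hn)
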